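/- (Algebraic core of the theorem on expectations under linear SDEs.) Let d be a positive natural number, let S be a symmetric positive definite d×d real matrix, let Q and D be d×d real matrices, and let A be a symmetric d×d real matrix satisfying the Lyapunov relation D = −A·S − S·Aᵀ + Q. Then vec(A) = (S ⊕ S)⁻¹ · vec(Q − D). Consequently, A is the unique symmetric matrix satisfying D = −A·S − S·Aᵀ + Q, and if moreover m, m' ∈ ℝ^d and b := m' + A·m, then the matrix B defined by vec(B) = (S ⊕ S)⁻¹ · vec(Q − D) satisfies B = A and m' + B·m = b. -/

import Mathlib

/-!
Since `(I ⊗ S + S ⊗ I) vec X = vec (S X + X Sᵀ)`, for symmetric `S` and `A` the Lyapunov relation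
is the linear system `(S ⊕ S) vec A = vec (Q - D)`. The Kronecker sum of a positive definite
matrix is positive definite, hence invertible, which gives both the formula and uniqueness.
`Matrix.vecCol` is definitionally Mathlib's `Matrix.vec`, so `Matrix.vec_inj` applies to it.
-/

open Matrix
open scoped Kronecker

/-- Column-stacking vectorization of a square matrix: `vec A (i, j) = A j i`. -/
def Matrix.vecCol {d : ℕ} (A : Matrix (Fin d) (Fin d) ℝ) : Fin d × Fin d → ℝ :=
  fun p => A p.2 p.1

namespace Matrix

variable {n R : Type*} [Fintype n] [DecidableEq n]

theorem one_kronecker_add_kronecker_one_mulVec_vec [CommSemiring R] (S X : Matrix n n R) :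
    (1 ⊗ₖ S + S ⊗ₖ 1) *ᵥ vec X = vec (S * X + X * Sᵀ) := by
  rw [add_mulVec, kronecker_mulVec_vec, kronecker_mulVec_vec, transpose_one, Matrix.mul_one,
    Matrix.one_mul, vec_add]

open scoped ComplexOrder in
theorem PosDef.one_kronecker_add_kronecker_one {𝕜 : Type*} [RCLike 𝕜] {S : Matrix n n 𝕜}
    (hS : S.PosDef) : (1 ⊗ₖ S + S ⊗ₖ 1).PosDef :=
  (PosDef.one.kronecker hS).add (hS.kronecker PosDef.one)

theorem one_kronecker_add_kronecker_one_mulVec_vec_of_lyapunov [CommRing R]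
    {S Q D M : Matrix n n R} (hS : Sᵀ = S) (hM : Mᵀ = M) (hlyap : D = -(M * S) - S * Mᵀ + Q) :
    (1 ⊗ₖ S + S ⊗ₖ 1) *ᵥ vec M = vec (Q - D) := by
  rw [one_kronecker_add_kronecker_one_mulVec_vec, hlyap, hS, hM]
  congr 1
  abel

end Matrix

theorem vec_eq_kroneckerSum_inv_vec_of_lyapunov_general (d : ℕ)
    (S Q D A : Matrix (Fin d) (Fin d) ℝ) (hS : S.PosDef)
    (hAsymm : Aᵀ = A) (hlyap : D = -(A * S) - S * Aᵀ + Q) :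
    A.vecCol =
      ((1 : Matrix (Fin d) (Fin d) ℝ) ⊗ₖ S + S ⊗ₖ (1 : Matrix (Fin d) (Fin d) ℝ))⁻¹ *ᵥ
        (Q - D).vecCol ∧
    (∀ A' : Matrix (Fin d) (Fin d) ℝ, A'ᵀ = A' →
      D = -(A' * S) - S * A'ᵀ + Q → A' = A) ∧
    (∀ (m m' b : Fin d → ℝ), b = m' + A *ᵥ m →
      ∀ B : Matrix (Fin d) (Fin d) ℝ,
        B.vecCol =
          ((1 : Matrix (Fin d) (Fin d) ℝ) ⊗ₖ S + S ⊗ₖ (1 : Matrix (Fin d) (Fin d) ℝ))⁻¹ *ᵥ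
            (Q - D).vecCol →
        B = A ∧ m' + B *ᵥ m = b) := by
  have hSsymm : Sᵀ = S := hS.isHermitian
  have := hS.one_kronecker_add_kronecker_one.isUnit.invertible
  have solve (M : Matrix (Fin d) (Fin d) ℝ) (hM : Mᵀ = M) (hMlyap : D = -(M * S) - S * Mᵀ + Q) :
      M.vecCol = (1 ⊗ₖ S + S ⊗ₖ 1)⁻¹ *ᵥ (Q - D).vecCol :=
    (inv_mulVec_eq_vec
      (one_kronecker_add_kronecker_one_mulVec_vec_of_lyapunov hSsymm hM hMlyap).symm).symm
  have hA := solve A hAsymm hlyap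
  refine ⟨hA, fun A' hA' hA'lyap => vec_inj.mp ((solve A' hA' hA'lyap).trans hA.symm), ?_⟩
  intro m m' b hb B hB
  obtain rfl : B = A := vec_inj.mp (hB.trans hA.symm)
  exact ⟨rfl, hb.symm⟩

/-- Algebraic core of the theorem on expectations under linear SDEs: if `S` is symmetric
positive definite and the symmetric matrix `A` satisfies the Lyapunov relation
`D = -A * S - S * Aᵀ + Q`, then `vec A = (S ⊕ S)⁻¹ *ᵥ vec (Q - D)`; `A` is the unique
symmetric solution; and the matrix `B` with `vec B = (S ⊕ S)⁻¹ *ᵥ vec (Q - D)` satisfies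
`B = A` and `m' + B *ᵥ m = b` whenever `b = m' + A *ᵥ m`. -/
theorem vec_eq_kroneckerSum_inv_vec_of_lyapunov (d : ℕ) (hd : 0 < d)
    (S Q D A : Matrix (Fin d) (Fin d) ℝ) (hS : S.PosDef) (hSsymm : Sᵀ = S)
    (hAsymm : Aᵀ = A) (hlyap : D = -(A * S) - S * Aᵀ + Q) :
    A.vecCol =
      ((1 : Matrix (Fin d) (Fin d) ℝ) ⊗ₖ S + S ⊗ₖ (1 : Matrix (Fin d) (Fin d) ℝ))⁻¹ *ᵥ
        (Q - D).vecCol ∧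
    (∀ A' : Matrix (Fin d) (Fin d) ℝ, A'ᵀ = A' →
      D = -(A' * S) - S * A'ᵀ + Q → A' = A) ∧
    (∀ (m m' b : Fin d → ℝ), b = m' + A *ᵥ m →
      ∀ B : Matrix (Fin d) (Fin d) ℝ,
        B.vecCol =
          ((1 : Matrix (Fin d) (Fin d) ℝ) ⊗ₖ S + S ⊗ₖ (1 : Matrix (Fin d) (Fin d) ℝ))⁻¹ *ᵥ
            (Q - D).vecCol →
        B = A ∧ m' + B *ᵥ m = b) :=
  vec_eq_kroneckerSum_inv_vec_of_lyapunov_general d S Q D A hS hAsymm hlyap
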